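/- arXiv:2009.01948 — 3 statements merged into one kernel-verified Lean document; each statement's English description precedes it below -/
import Mathlib

section
/- Let (M,g) be a lorentzian manifold, ∇^g its Levi-Civita connection, and ∇ another metric connection (∇g = 0) with ∇ξ = 0 for a null vector field ξ. Let κ := ∇ − ∇^g be the contorsion and T the torsion of ∇. Then for all vector fields X,Y: g(T(ξ,X),Y) + g(T(ξ,Y),X) + g(T(X,Y),ξ) = 2 g(∇^g_X ξ, Y). -/
/-- Abstract model of a lorentzian manifold: `F` is the ring of smooth
functions (an `ℝ`-algebra), `V` the `F`-module of vector fields, `act X` the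
derivative along `X`, `bracket` the Lie bracket, `g` the (symmetric) metric,
`lc` its Levi-Civita connection (metric and torsion-free) and `conn` a second
metric connection with `∇ξ = 0` for a null vector field `ξ`.  Then, with `T`
the torsion of `conn` (`T(X,Y) = ∇_X Y − ∇_Y X − [X,Y]`), for all `X, Y`:
`g(T(ξ,X),Y) + g(T(ξ,Y),X) + g(T(X,Y),ξ) = 2 g(∇^g_X ξ, Y)`. -/
theorem intrinsic_torsion_is_nabla_xi
    (F : Type*) [CommRing F] [Algebra ℝ F]
    (V : Type*) [AddCommGroup V] [Module F V]
    (act : V → F →+ F) (bracket : V → V → V)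
    (lc conn : V → V → V)
    (g : V →ₗ[F] V →ₗ[F] F)
    (hsymm : ∀ X Y, g X Y = g Y X)
    (hlc_metric : ∀ X Y Z, act X (g Y Z) = g (lc X Y) Z + g Y (lc X Z))
    (hlc_tf : ∀ X Y, lc X Y - lc Y X = bracket X Y)
    (hconn_metric : ∀ X Y Z, act X (g Y Z) = g (conn X Y) Z + g Y (conn X Z))
    (ξ : V) (hnull : g ξ ξ = 0)
    (hconnξ : ∀ X, conn X ξ = 0) :
    ∀ X Y,
      g (conn ξ X - conn X ξ - bracket ξ X) Y
        + g (conn ξ Y - conn Y ξ - bracket ξ Y) X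
        + g (conn X Y - conn Y X - bracket X Y) ξ
      = 2 * g (lc X ξ) Y := by
  intro X Y
  have skew : ∀ A B C : V,
      g (conn A B) C - g (lc A B) C = -(g (conn A C) B - g (lc A C) B) := by
    intro A B C
    have h1 := hconn_metric A B C
    have h2 := hlc_metric A B C
    have h3 := hsymm B (conn A C)
    have h4 := hsymm B (lc A C)
    linear_combination h2 - h1 - h3 + h4
  have z1 : g (conn X ξ) Y = 0 := by rw [hconnξ]; simp
  have z2 : g (conn Y ξ) X = 0 := by rw [hconnξ]; simp
  rw [← hlc_tf ξ X, ← hlc_tf ξ Y, ← hlc_tf X Y]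
  simp only [map_sub, LinearMap.sub_apply]
  linear_combination skew ξ X Y + skew X Y ξ - skew Y X ξ - 2 * z1
end

section
/- Let V = ℝⁿ with basis (H,P₁,…,P_{n−1}). The carrollian structure group G_car = Stab(H, Σ_a π^a ⊗ π^a) (matrices [[1,vᵀ],[0,A]], A ∈ O(n−1)) and the galilean structure group G_gal = Stab(η, Σ_a P_a ⊗ P_a) (matrices [[1,0],[v,A]]) are not conjugate subgroups of GL(n,ℝ) for n ≥ 2, even though both are abstractly isomorphic to O(n−1) ⋉ ℝ^{n−1}. -/
open Matrix

/-- Let `V = ℝⁿ` with `n = 1 + m`, `m ≥ 1`, coordinates indexed by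
`Fin 1 ⊕ Fin m`.  The carrollian structure group (matrices `[[1,vᵀ],[0,A]]`
with `A ∈ O(m)`) and the galilean structure group (matrices `[[1,0],[v,A]]`
with `A ∈ O(m)`) are not conjugate subgroups of `GL(n,ℝ)`, even though both
are abstractly isomorphic to `O(m) ⋉ ℝ^m`: no invertible matrix `γ` conjugates
the galilean group onto the carrollian group. -/
theorem galilean_carrollian_not_conjugate (m : ℕ) (hm : 1 ≤ m)
    (Sgal Scar : Set (Matrix (Fin 1 ⊕ Fin m) (Fin 1 ⊕ Fin m) ℝ))
    (hSgal : Sgal = {g | ∃ (v : Fin m → ℝ) (A : Matrix (Fin m) (Fin m) ℝ),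
        A ∈ Matrix.orthogonalGroup (Fin m) ℝ ∧
        g = Matrix.fromBlocks (1 : Matrix (Fin 1) (Fin 1) ℝ) 0
              (Matrix.of fun i _ => v i) A})
    (hScar : Scar = {g | ∃ (v : Fin m → ℝ) (A : Matrix (Fin m) (Fin m) ℝ),
        A ∈ Matrix.orthogonalGroup (Fin m) ℝ ∧
        g = Matrix.fromBlocks (1 : Matrix (Fin 1) (Fin 1) ℝ)
              (Matrix.of fun _ j => v j) 0 A}) :
    ∀ γ : (Matrix (Fin 1 ⊕ Fin m) (Fin 1 ⊕ Fin m) ℝ)ˣ,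
      (fun g => (γ : Matrix (Fin 1 ⊕ Fin m) (Fin 1 ⊕ Fin m) ℝ) * g *
          ((γ⁻¹ : (Matrix (Fin 1 ⊕ Fin m) (Fin 1 ⊕ Fin m) ℝ)ˣ) :
            Matrix (Fin 1 ⊕ Fin m) (Fin 1 ⊕ Fin m) ℝ)) '' Sgal ≠ Scar := by
  intro γ hEq
  -- the invariant vector of the carrollian group
  set u : (Fin 1 ⊕ Fin m) → ℝ := Sum.elim (fun _ => 1) (fun _ => 0) with hu
  -- every carrollian matrix fixes u
  have hcar : ∀ c ∈ Scar, c *ᵥ u = u := by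
    intro c hc
    rw [hScar] at hc
    obtain ⟨v, A, hA, rfl⟩ := hc
    show _ *ᵥ Sum.elim _ _ = _
    rw [Matrix.fromBlocks_mulVec]
    funext x
    cases x <;> simp [hu, Matrix.mulVec, dotProduct]
  set w : (Fin 1 ⊕ Fin m) → ℝ :=
    ((γ⁻¹ : (Matrix (Fin 1 ⊕ Fin m) (Fin 1 ⊕ Fin m) ℝ)ˣ) :
      Matrix (Fin 1 ⊕ Fin m) (Fin 1 ⊕ Fin m) ℝ) *ᵥ u with hwdef
  -- every galilean matrix fixes w
  have hfix : ∀ g ∈ Sgal, g *ᵥ w = w := by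
    intro g hg
    have hmem : (γ : Matrix (Fin 1 ⊕ Fin m) (Fin 1 ⊕ Fin m) ℝ) * g *
        ((γ⁻¹ : (Matrix (Fin 1 ⊕ Fin m) (Fin 1 ⊕ Fin m) ℝ)ˣ) :
          Matrix (Fin 1 ⊕ Fin m) (Fin 1 ⊕ Fin m) ℝ) ∈ Scar := by
      rw [← hEq]; exact ⟨g, hg, rfl⟩
    have h1 := hcar _ hmem
    have h2 := congrArg (fun x =>
      ((γ⁻¹ : (Matrix (Fin 1 ⊕ Fin m) (Fin 1 ⊕ Fin m) ℝ)ˣ) :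
        Matrix (Fin 1 ⊕ Fin m) (Fin 1 ⊕ Fin m) ℝ) *ᵥ x) h1
    simp only [Matrix.mulVec_mulVec] at h2
    rw [show ((γ⁻¹ : (Matrix (Fin 1 ⊕ Fin m) (Fin 1 ⊕ Fin m) ℝ)ˣ) :
        Matrix (Fin 1 ⊕ Fin m) (Fin 1 ⊕ Fin m) ℝ) *
        ((γ : Matrix (Fin 1 ⊕ Fin m) (Fin 1 ⊕ Fin m) ℝ) * g *
          ((γ⁻¹ : (Matrix (Fin 1 ⊕ Fin m) (Fin 1 ⊕ Fin m) ℝ)ˣ) :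
            Matrix (Fin 1 ⊕ Fin m) (Fin 1 ⊕ Fin m) ℝ)) =
        g * ((γ⁻¹ : (Matrix (Fin 1 ⊕ Fin m) (Fin 1 ⊕ Fin m) ℝ)ˣ) :
          Matrix (Fin 1 ⊕ Fin m) (Fin 1 ⊕ Fin m) ℝ) from by
      rw [← mul_assoc, ← mul_assoc, Units.inv_mul, one_mul]] at h2
    rw [hwdef, Matrix.mulVec_mulVec]
    exact h2
  have hw : w = Sum.elim (fun i => w (Sum.inl i)) (fun i => w (Sum.inr i)) := by
    funext x; cases x <;> rfl
  -- from boost with v = 1 : the time component of w vanishes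
  have hg1 : (Matrix.fromBlocks (1 : Matrix (Fin 1) (Fin 1) ℝ) 0
      (Matrix.of fun i _ => (fun _ => (1:ℝ)) i) 1) ∈ Sgal := by
    rw [hSgal]; exact ⟨fun _ => 1, 1, one_mem _, rfl⟩
  have h1 := hfix _ hg1
  rw [hw, Matrix.fromBlocks_mulVec] at h1
  have htime : w (Sum.inl 0) = 0 := by
    have := congrFun h1 (Sum.inr ⟨0, hm⟩)
    simp [Matrix.mulVec, dotProduct, Fin.sum_univ_one] at this
    linarith
  -- from rotation A = -1 : the space components vanish
  have hneg : (-1 : Matrix (Fin m) (Fin m) ℝ) ∈ Matrix.orthogonalGroup (Fin m) ℝ := by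
    constructor <;> simp
  have hg2 : (Matrix.fromBlocks (1 : Matrix (Fin 1) (Fin 1) ℝ) 0
      (Matrix.of fun i _ => (fun _ => (0:ℝ)) i) (-1)) ∈ Sgal := by
    rw [hSgal]; exact ⟨fun _ => 0, -1, hneg, rfl⟩
  have h2 := hfix _ hg2
  rw [hw, Matrix.fromBlocks_mulVec] at h2
  simp only [Matrix.neg_mulVec, Matrix.one_mulVec] at h2
  have hspace : ∀ i, w (Sum.inr i) = 0 := by
    intro i
    have := congrFun h2 (Sum.inr i)
    simp [Matrix.mulVec, dotProduct] at this
    linarith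
  have hw0 : w = 0 := by
    funext x
    cases x with
    | inl i =>
      have : i = 0 := Subsingleton.elim _ _
      simpa [this] using htime
    | inr i => exact hspace i
  -- contradiction: u = γ *ᵥ w = 0 but u (inl 0) = 1
  have hu0 : u = 0 := by
    have h : u = (γ : Matrix (Fin 1 ⊕ Fin m) (Fin 1 ⊕ Fin m) ℝ) *ᵥ w := by
      rw [hwdef, Matrix.mulVec_mulVec, Units.mul_inv, Matrix.one_mulVec]
    rw [h, hw0, Matrix.mulVec_zero]
  have := congrFun hu0 (Sum.inl 0)
  simp [hu] at this
end

section
/- Let η be a Lorentzian inner product on V = ℝ^{n+1} with Witt basis (Z,H,P_a), η(Z,H)=1, η(P_a,P_b)=δ_{ab}, η(Z,Z)=η(H,H)=η(Z,P_a)=η(H,P_a)=0. Let 𝔤 = {A ∈ so(V,η) : A(Z) = 0} (the bargmann algebra stabilizing the null vector Z). Then a map κ : V → so(V,η) satisfies: λ(∂κ) = 0, where (∂κ)(v,w)=κ_v w − κ_w v and λ(φ)(v,w) := η(φ(Z,v),w) + η(φ(Z,w),v) + η(φ(v,w),Z), if and only if κ takes values in 𝔤 (i.e. κ_v Z = 0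 for all v). -/
/-- Let `η` be a (lorentzian) nondegenerate symmetric bilinear form on a real
vector space `V`, with a fixed null vector `Z` (e.g. the first Witt basis
vector of `ℝ^{n+1}`), and let `𝔤 = {A ∈ so(V,η) : A Z = 0}` be the bargmann
algebra.  A linear map `κ : V → so(V,η)` satisfies `λ(∂κ) = 0`, where
`(∂κ)(v,w) = κ_v w − κ_w v` is the Spencer differential and
`λ(φ)(v,w) = η(φ(Z,v),w) + η(φ(Z,w),v) + η(φ(v,w),Z)`, if and only if `κ`
takes values in `𝔤`, i.e. `κ_v Z = 0` for all `v`. -/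
theorem bargmann_spencer_kernel_characterisation
    (V : Type*) [AddCommGroup V] [Module ℝ V]
    (η : V →ₗ[ℝ] V →ₗ[ℝ] ℝ)
    (hsymm : ∀ v w, η v w = η w v)
    (hnd : ∀ v, (∀ w, η v w = 0) → v = 0)
    (Z : V) (hZ : η Z Z = 0)
    (κ : V →ₗ[ℝ] V →ₗ[ℝ] V)
    (hskew : ∀ v x y, η (κ v x) y = - η x (κ v y)) :
    (∀ v w, η (κ Z v - κ v Z) w + η (κ Z w - κ w Z) v
        + η (κ v w - κ w v) Z = 0)
    ↔ ∀ v, κ v Z = 0 := by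
  have key : ∀ v w, η (κ Z v - κ v Z) w + η (κ Z w - κ w Z) v
      + η (κ v w - κ w v) Z = -2 * η (κ v Z) w := by
    intro v w
    simp only [map_sub, LinearMap.sub_apply]
    rw [hskew Z v w, hskew v w Z, hskew w v Z, hsymm v (κ Z w),
      hsymm w (κ v Z), hsymm v (κ w Z)]
    ring
  constructor
  · intro h v
    apply hnd
    intro w
    have := h v w
    rw [key v w] at this
    linarith
  · intro h v w
    rw [key v w, h v]
    simp
end
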